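/- Let ℓ be an odd prime. The set of indices [GL₂(ℤ/ℓℤ) : G] over subgroups G of GL₂(ℤ/ℓℤ) that belong to the normalizer N_ns(ℓ) of the nonsplit Cartan equals the set of positive integers divisible by ℓ(ℓ−1)/2 and dividing ℓ(ℓ+1)(ℓ−1)²/2. -/

import Mathlib

open Matrix

abbrev GL2 (ℓ : ℕ) : Type := GL (Fin 2) (ZMod ℓ)

namespace Paper

/-- The underlying matrix of an element of `GL₂(ℤ/ℓℤ)`. -/
def mat {ℓ : ℕ} (g : GL2 ℓ) : Matrix (Fin 2) (Fin 2) (ZMod ℓ) := ↑g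

/-- The set of scalar matrices `Z(ℓ)`. -/
def ZSet (ℓ : ℕ) : Set (GL2 ℓ) :=
  { g | ∃ x : ZMod ℓ, mat g = x • (1 : Matrix (Fin 2) (Fin 2) (ZMod ℓ)) }

/-- The split Cartan `C_s(ℓ)`: invertible diagonal matrices. -/
def CsSet (ℓ : ℕ) : Set (GL2 ℓ) := { g | mat g 0 1 = 0 ∧ mat g 1 0 = 0 }

/-- The normalizer `N_s(ℓ)` of the split Cartan: diagonal and antidiagonal matrices. -/
def NsSet (ℓ : ℕ) : Set (GL2 ℓ) :=
  CsSet ℓ ∪ { g | mat g 0 0 = 0 ∧ mat g 1 1 = 0 }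

/-- The nonsplit Cartan `C_ns(ℓ)` relative to the nonsquare `ε`. -/
def CnsSet (ℓ : ℕ) (ε : ZMod ℓ) : Set (GL2 ℓ) :=
  { g | ∃ x y : ZMod ℓ, mat g = !![x, ε * y; y, x] }

/-- The normalizer `N_ns(ℓ)` of the nonsplit Cartan. -/
def NnsSet (ℓ : ℕ) (ε : ZMod ℓ) : Set (GL2 ℓ) :=
  CnsSet ℓ ε ∪ { g | ∃ x y : ZMod ℓ, mat g = !![x, -(ε * y); y, -x] }

/-- The ramified Cartan `C_r(ℓ)`. -/
def CrSet (ℓ : ℕ) : Set (GL2 ℓ) :=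
  { g | mat g 1 0 = 0 ∧ mat g 0 0 = mat g 1 1 }

/-- The Borel subgroup `B(ℓ)`: upper triangular matrices. -/
def BorelSet (ℓ : ℕ) : Set (GL2 ℓ) := { g | mat g 1 0 = 0 }

/-- `G` is conjugate in `GL₂(ℤ/ℓℤ)` to a subgroup of the set `M`. -/
def ConjSub {ℓ : ℕ} (G : Subgroup (GL2 ℓ)) (M : Set (GL2 ℓ)) : Prop :=
  ∃ a : GL2 ℓ, ∀ g ∈ G, a * g * a⁻¹ ∈ M

/-- `G` belongs to `Z(ℓ)`. -/
def BelongsZ {ℓ : ℕ} (G : Subgroup (GL2 ℓ)) : Prop := ConjSub G (ZSet ℓ)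

/-- `G` belongs to `C_s(ℓ)`. -/
def BelongsCs {ℓ : ℕ} (G : Subgroup (GL2 ℓ)) : Prop :=
  ConjSub G (CsSet ℓ) ∧ ¬ ConjSub G (ZSet ℓ)

/-- `G` belongs to `C_ns(ℓ)`. -/
def BelongsCns {ℓ : ℕ} (ε : ZMod ℓ) (G : Subgroup (GL2 ℓ)) : Prop :=
  ConjSub G (CnsSet ℓ ε) ∧ ¬ ConjSub G (ZSet ℓ)

/-- `G` belongs to `N_s(ℓ)`. -/
def BelongsNs {ℓ : ℕ} (G : Subgroup (GL2 ℓ)) : Prop :=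
  ConjSub G (NsSet ℓ) ∧ ¬ ConjSub G (CsSet ℓ)

/-- `G` belongs to `N_ns(ℓ)`. -/
def BelongsNns {ℓ : ℕ} (ε : ZMod ℓ) (G : Subgroup (GL2 ℓ)) : Prop :=
  ConjSub G (NnsSet ℓ ε) ∧ ¬ ConjSub G (CnsSet ℓ ε)

/-- `G` belongs to the ramified Cartan `C_r(ℓ)`. -/
def BelongsCr {ℓ : ℕ} (G : Subgroup (GL2 ℓ)) : Prop :=
  ConjSub G (CrSet ℓ) ∧ ¬ ConjSub G (ZSet ℓ)

/-- `H` is a twist of `G`: either `H = ⟨G, -I⟩`, or `H` is an index-2 subgroup of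
`⟨G, -I⟩` not containing `-I`. -/
def TwistOf {ℓ : ℕ} (G H : Subgroup (GL2 ℓ)) : Prop :=
  H = G ⊔ Subgroup.closure {(-1 : GL2 ℓ)} ∨
    (H ≤ G ⊔ Subgroup.closure {(-1 : GL2 ℓ)} ∧
      H.relIndex (G ⊔ Subgroup.closure {(-1 : GL2 ℓ)}) = 2 ∧
      (-1 : GL2 ℓ) ∉ H)

/-- `H` fixes a nonzero vector of `(ℤ/ℓℤ)²`. -/
def FixesVec {ℓ : ℕ} (H : Subgroup (GL2 ℓ)) : Prop :=
  ∃ v : Fin 2 → ZMod ℓ, v ≠ 0 ∧ ∀ h ∈ H, Matrix.mulVec (mat h) v = v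

end Paper

/-!
`N_ns(ℓ)` is `C ∪ wC`, where the nonsplit Cartan `C` is the unit group of the field
`𝔽_ℓ[√ε]` realised inside `M₂(𝔽_ℓ)`, hence cyclic of order `ℓ² - 1`, and `w = diag(1, -1)` is an
involution acting on `C` by Galois conjugation. So `|N_ns(ℓ)| = 2(ℓ² - 1)` and
`[GL₂ : N_ns(ℓ)] = ℓ(ℓ - 1)/2`.

If `G` is conjugate into `N_ns(ℓ)` but not into `C`, the conjugate contains an element of
`wC`; its square lies in `C`, so it has even order. Hence `[GL₂ : G]` is a multiple of
`ℓ(ℓ - 1)/2` and divides `|GL₂|/2`. Conversely, for `m ∣ ℓ² - 1` the subgroup of order `m` of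
the cyclic group `C` is characteristic, so it is normalised by `w`, and adjoining `w` gives a
subgroup of order `2m`. It is not conjugate into `C`: a conjugate of `w` has trace `0` and
determinant `-1`, and an element `x + y√ε` of `C` with these invariants makes `ε = y⁻²` a square.
-/

namespace Subgroup

variable {G : Type*} [Group G]

theorem two_dvd_orderOf_of_sq_mem {H : Subgroup G} {g : G} (hsq : g ^ 2 ∈ H) (hg : g ∉ H) :
    2 ∣ orderOf g := by
  by_contra hodd
  obtain ⟨k, hk⟩ := Nat.odd_iff.mpr (Nat.two_dvd_ne_zero.mp hodd)
  have hg_eq : g = (g ^ 2) ^ (k + 1) := by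
    rw [← pow_mul, show 2 * (k + 1) = orderOf g + 1 by omega, pow_succ, pow_orderOf_eq_one,
      one_mul]
  exact hg (hg_eq ▸ pow_mem hsq _)

theorem normalizer_zpowers_le_normalizer_zpowers_pow (ζ : G) (k : ℕ) :
    normalizer (zpowers ζ : Set G) ≤ normalizer (zpowers (ζ ^ k) : Set G) := by
  have conj_mem : ∀ u ∈ normalizer (zpowers ζ : Set G), ∀ h ∈ zpowers (ζ ^ k),
      u * h * u⁻¹ ∈ zpowers (ζ ^ k) := by
    intro u hu h hh
    obtain ⟨j, hj⟩ := mem_zpowers_iff.mp ((mem_normalizer_iff.mp hu ζ).mp (mem_zpowers ζ))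
    obtain ⟨i, rfl⟩ := mem_zpowers_iff.mp hh
    refine mem_zpowers_iff.mpr ⟨j * i, ?_⟩
    rw [← MulAut.conj_apply, map_zpow, map_pow, MulAut.conj_apply, ← hj]
    simp only [← zpow_natCast, ← _root_.zpow_mul]
    ring_nf
  intro u hu
  refine mem_normalizer_iff.mpr fun h => ⟨conj_mem u hu h, fun h' => ?_⟩
  simpa [mul_assoc] using conj_mem u⁻¹ (inv_mem hu) _ h'

def adjoinInvolution (H : Subgroup G) {w : G} (hw : w * w = 1)
    (hwH : w ∈ normalizer (H : Set G)) : Subgroup G where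
  carrier := {g | g ∈ H ∨ w * g ∈ H}
  one_mem' := Or.inl H.one_mem
  mul_mem' := by
    have conj : ∀ h ∈ H, w * h * w⁻¹ ∈ H := fun h => (mem_normalizer_iff.mp hwH h).mp
    rintro g h (hg | hg) (hh | hh)
    · exact Or.inl (mul_mem hg hh)
    · have : w * (g * h) = w * g * w⁻¹ * (w * h) := by group
      exact Or.inr (this ▸ mul_mem (conj g hg) hh)
    · exact Or.inr (mul_assoc w g h ▸ mul_mem hg hh)
    · have : g * h = w * (w * g) * w⁻¹ * (w * h) := by
        simp only [← mul_assoc, hw, one_mul, inv_mul_cancel_right]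
      exact Or.inl (this ▸ mul_mem (conj _ hg) hh)
  inv_mem' := by
    have conj : ∀ h ∈ H, w * h * w⁻¹ ∈ H := fun h => (mem_normalizer_iff.mp hwH h).mp
    rintro g (hg | hg)
    · exact Or.inl (inv_mem hg)
    · have : w * g⁻¹ = w * (w * g)⁻¹ * w⁻¹ := by
        rw [_root_.mul_inv_rev, inv_eq_of_mul_eq_one_right hw, ← mul_assoc, mul_assoc _ w w, hw,
          mul_one]
      exact Or.inr (this ▸ conj _ (inv_mem hg))

section AdjoinInvolution

variable {H : Subgroup G} {w : G} {hw : w * w = 1} {hwH : w ∈ normalizer (H : Set G)}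

theorem le_adjoinInvolution : H ≤ H.adjoinInvolution hw hwH := fun _ => Or.inl

theorem mem_adjoinInvolution_self : w ∈ H.adjoinInvolution hw hwH :=
  Or.inr (hw ▸ H.one_mem)

theorem adjoinInvolution_mono {K : Subgroup G} {hwK : w ∈ normalizer (K : Set G)} (hHK : H ≤ K) :
    H.adjoinInvolution hw hwH ≤ K.adjoinInvolution hw hwK :=
  fun _ => Or.imp (@hHK _) (@hHK _)

theorem sq_mem_of_mem_adjoinInvolution {g : G} (hg : g ∈ H.adjoinInvolution hw hwH) :
    g ^ 2 ∈ H := by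
  rcases hg with hg | hg
  · exact pow_mem hg 2
  · have : g ^ 2 = w * (w * g) * w⁻¹ * (w * g) := by
      simp only [sq, ← mul_assoc, hw, one_mul, inv_mul_cancel_right]
    exact this ▸ mul_mem ((mem_normalizer_iff.mp hwH _).mp hg) hg

theorem two_dvd_card_of_le_adjoinInvolution {K : Subgroup G}
    (hK : K ≤ H.adjoinInvolution hw hwH) (hKH : ¬K ≤ H) : 2 ∣ Nat.card K := by
  obtain ⟨g, hgK, hgH⟩ := SetLike.not_le_iff_exists.mp hKH
  exact (two_dvd_orderOf_of_sq_mem (sq_mem_of_mem_adjoinInvolution (hK hgK)) hgH).trans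
    (K.orderOf_dvd_natCard hgK)

theorem relIndex_adjoinInvolution (hwH' : w ∉ H) :
    H.relIndex (H.adjoinInvolution hw hwH) = 2 := by
  refine relIndex_eq_two_iff.mpr ⟨w, mem_adjoinInvolution_self, fun g hg => ?_⟩
  by_cases hgH : g ∈ H
  · exact Or.inr ⟨hgH, fun hgw => hwH' (by simpa using mul_mem (inv_mem hgH) hgw)⟩
  · refine Or.inl ⟨?_, hgH⟩
    have : g * w = w⁻¹ * (w * g) * w := by group
    exact this ▸ (mem_normalizer_iff''.mp hwH _).mp (hg.resolve_left hgH)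

theorem card_adjoinInvolution (hwH' : w ∉ H) :
    Nat.card (H.adjoinInvolution hw hwH) = 2 * Nat.card H := by
  rw [← relIndex_adjoinInvolution (hw := hw) (hwH := hwH) hwH', relIndex, mul_comm,
    ← Nat.card_congr (subgroupOfEquivOfLe (le_adjoinInvolution (hw := hw) (hwH := hwH))).toEquiv,
    card_mul_index]

end AdjoinInvolution

end Subgroup

section NonsplitCartan

variable {K : Type*} [Field K]

/-- The matrix of multiplication by `x + y√ε` on `K(√ε)` in the basis `1, √ε`. -/
def cartanMat (ε x y : K) : Matrix (Fin 2) (Fin 2) K := !![x, ε * y; y, x]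

theorem cartanMat_add (ε x y a b : K) :
    cartanMat ε x y + cartanMat ε a b = cartanMat ε (x + a) (y + b) := by
  ext i j; fin_cases i <;> fin_cases j <;> simp [cartanMat, mul_add]

theorem cartanMat_mul (ε x y a b : K) :
    cartanMat ε x y * cartanMat ε a b = cartanMat ε (x * a + ε * (y * b)) (x * b + y * a) := by
  ext i j; fin_cases i <;> fin_cases j <;> simp [cartanMat] <;> ring

theorem neg_cartanMat (ε x y : K) : -cartanMat ε x y = cartanMat ε (-x) (-y) := by
  ext i j; fin_cases i <;> fin_cases j <;> simp [cartanMat]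

theorem cartanMat_zero (ε : K) : cartanMat ε 0 0 = 0 := by
  ext i j; fin_cases i <;> fin_cases j <;> simp [cartanMat]

theorem cartanMat_one (ε : K) : cartanMat ε 1 0 = 1 := by
  ext i j; fin_cases i <;> fin_cases j <;> simp [cartanMat]

theorem det_cartanMat (ε x y : K) : (cartanMat ε x y).det = x ^ 2 - ε * y ^ 2 := by
  rw [cartanMat, det_fin_two_of]; ring

theorem trace_cartanMat (ε x y : K) : (cartanMat ε x y).trace = 2 * x := by
  rw [cartanMat, trace_fin_two_of]; ring

theorem cartanMat_injective (ε : K) :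
    Function.Injective fun p : K × K => cartanMat ε p.1 p.2 := by
  rintro ⟨x, y⟩ ⟨a, b⟩ h
  have h00 := congrFun (congrFun h 0) 0
  have h10 := congrFun (congrFun h 1) 0
  simp only [cartanMat, of_apply, cons_val', cons_val_zero, cons_val_one, empty_val',
    cons_val_fin_one] at h00 h10
  rw [h00, h10]

theorem det_cartanMat_ne_zero {ε : K} (hε : ∀ t : K, t ^ 2 ≠ ε) {x y : K}
    (hxy : cartanMat ε x y ≠ 0) : (cartanMat ε x y).det ≠ 0 := by
  rw [det_cartanMat]
  intro h
  by_cases hy : y = 0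
  · subst hy
    have hx : x = 0 := pow_eq_zero_iff two_ne_zero |>.mp (by simpa using h)
    exact hxy (hx ▸ cartanMat_zero ε)
  · exact hε (x / y) (by field_simp; linear_combination h)

def cartanRing (ε : K) : Subring (Matrix (Fin 2) (Fin 2) K) where
  carrier := {A | ∃ x y, A = cartanMat ε x y}
  zero_mem' := ⟨0, 0, (cartanMat_zero ε).symm⟩
  one_mem' := ⟨1, 0, (cartanMat_one ε).symm⟩
  add_mem' := by
    rintro _ _ ⟨x, y, rfl⟩ ⟨a, b, rfl⟩
    exact ⟨_, _, cartanMat_add ε x y a b⟩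
  mul_mem' := by
    rintro _ _ ⟨x, y, rfl⟩ ⟨a, b, rfl⟩
    exact ⟨_, _, cartanMat_mul ε x y a b⟩
  neg_mem' := by
    rintro _ ⟨x, y, rfl⟩
    exact ⟨_, _, neg_cartanMat ε x y⟩

instance (ε : K) : CommRing (cartanRing ε) where
  mul_comm := by
    rintro ⟨_, x, y, rfl⟩ ⟨_, a, b, rfl⟩
    apply Subtype.ext
    change cartanMat ε x y * cartanMat ε a b = cartanMat ε a b * cartanMat ε x y
    rw [cartanMat_mul, cartanMat_mul]
    congr 1 <;> ring

theorem isDomain_cartanRing {ε : K} (hε : ∀ t : K, t ^ 2 ≠ ε) : IsDomain (cartanRing ε) := by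
  refine @NoZeroDivisors.to_isDomain _ _ _ ⟨fun {s t} hst => ?_⟩
  rcases s with ⟨_, x, y, rfl⟩
  rcases t with ⟨_, a, b, rfl⟩
  have hprod : cartanMat ε x y * cartanMat ε a b = 0 := congrArg Subtype.val hst
  by_contra! h
  refine mul_ne_zero (det_cartanMat_ne_zero hε fun h0 => h.1 (Subtype.ext h0))
    (det_cartanMat_ne_zero hε fun h0 => h.2 (Subtype.ext h0)) ?_
  rw [← det_mul, hprod, det_zero]

theorem card_cartanRing (ε : K) : Nat.card (cartanRing ε) = Nat.card K ^ 2 := by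
  rw [sq, ← Nat.card_prod]
  refine (Nat.card_congr (Equiv.ofBijective (fun p => ⟨cartanMat ε p.1 p.2, p.1, p.2, rfl⟩)
    ⟨fun p q h => cartanMat_injective ε (congrArg Subtype.val h), ?_⟩)).symm
  rintro ⟨_, x, y, rfl⟩
  exact ⟨(x, y), rfl⟩

def nonsplitCartan (ε : K) : Subgroup (GL (Fin 2) K) where
  carrier := {g | ∃ x y, (g : Matrix (Fin 2) (Fin 2) K) = cartanMat ε x y}
  one_mem' := ⟨1, 0, (cartanMat_one ε).symm⟩
  mul_mem' := by
    rintro g h ⟨x, y, hg⟩ ⟨a, b, hh⟩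
    exact ⟨_, _, by rw [Units.val_mul, hg, hh, cartanMat_mul]⟩
  inv_mem' := by
    rintro g ⟨x, y, hg⟩
    have hd : x ^ 2 - ε * y ^ 2 ≠ 0 := by
      rw [← det_cartanMat, ← hg]; exact GeneralLinearGroup.det_ne_zero g
    refine ⟨x / (x ^ 2 - ε * y ^ 2), -y / (x ^ 2 - ε * y ^ 2), Units.inv_eq_of_mul_eq_one_right ?_⟩
    rw [hg, cartanMat_mul, ← cartanMat_one ε]
    congr 1
    · field_simp; ring
    · ring

theorem nonsplitCartan_eq_units (ε : K) :
    nonsplitCartan ε = (cartanRing ε).toSubmonoid.units := by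
  ext g
  exact ⟨fun hg => ⟨hg, inv_mem hg⟩, fun hg => hg.1⟩

def nonsplitCartanEquivUnits (ε : K) : nonsplitCartan ε ≃* (cartanRing ε)ˣ :=
  (MulEquiv.subgroupCongr (nonsplitCartan_eq_units ε)).trans
    (cartanRing ε).toSubmonoid.unitsEquivUnitsType

variable [Finite K] {ε : K}

theorem isCyclic_nonsplitCartan (hε : ∀ t : K, t ^ 2 ≠ ε) : IsCyclic (nonsplitCartan ε) := by
  have := isDomain_cartanRing hε
  exact isCyclic_of_surjective (nonsplitCartanEquivUnits ε).symm.toMonoidHom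
    (nonsplitCartanEquivUnits ε).symm.surjective

theorem card_nonsplitCartan (hε : ∀ t : K, t ^ 2 ≠ ε) :
    Nat.card (nonsplitCartan ε) = Nat.card K ^ 2 - 1 := by
  have := isDomain_cartanRing hε
  let := (Finite.isDomain_to_isField (cartanRing ε)).toField
  rw [Nat.card_congr (nonsplitCartanEquivUnits ε).toEquiv, Nat.card_units, card_cartanRing]

end NonsplitCartan

section NonsplitCartanNormalizer

variable {K : Type*} [Field K]

def diagOneNegOne : GL (Fin 2) K :=
  ⟨!![1, 0; 0, -1], !![1, 0; 0, -1], by simp [one_fin_two], by simp [one_fin_two]⟩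

theorem diagOneNegOne_mul_diagOneNegOne : (diagOneNegOne : GL (Fin 2) K) * diagOneNegOne = 1 :=
  Units.ext (by simp [diagOneNegOne, one_fin_two])

theorem diagOneNegOne_mul_cartanMat (ε x y : K) :
    (diagOneNegOne : GL (Fin 2) K) * cartanMat ε x y = !![x, -(ε * -y); -y, -x] := by
  simp [diagOneNegOne, cartanMat]

theorem diagOneNegOne_mul_mem_nonsplitCartan_iff {ε : K} {g : GL (Fin 2) K} :
    diagOneNegOne * g ∈ nonsplitCartan ε ↔
      ∃ x y, (g : Matrix (Fin 2) (Fin 2) K) = !![x, -(ε * y); y, -x] := by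
  constructor
  · rintro ⟨x, y, h⟩
    refine ⟨x, -y, ?_⟩
    rw [← diagOneNegOne_mul_cartanMat, ← h, Units.val_mul, ← mul_assoc, ← Units.val_mul,
      diagOneNegOne_mul_diagOneNegOne, Units.val_one, one_mul]
  · rintro ⟨x, y, h⟩
    refine ⟨x, -y, ?_⟩
    rw [Units.val_mul, h]
    simp [diagOneNegOne, cartanMat]

theorem diagOneNegOne_mem_normalizer (ε : K) :
    diagOneNegOne ∈ Subgroup.normalizer (nonsplitCartan ε : Set (GL (Fin 2) K)) := by
  have hinv : (diagOneNegOne : GL (Fin 2) K)⁻¹ = diagOneNegOne :=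
    inv_eq_of_mul_eq_one_right diagOneNegOne_mul_diagOneNegOne
  have conj_mem : ∀ h ∈ nonsplitCartan ε, diagOneNegOne * h * diagOneNegOne ∈ nonsplitCartan ε := by
    rintro h ⟨x, y, hh⟩
    refine ⟨x, -y, ?_⟩
    rw [Units.val_mul, Units.val_mul, hh]
    simp [diagOneNegOne, cartanMat]
  refine Subgroup.mem_normalizer_iff.mpr fun h => ⟨fun hh => hinv ▸ conj_mem h hh, fun hh => ?_⟩
  have hh' := conj_mem _ hh
  rwa [hinv, ← mul_assoc, ← mul_assoc, diagOneNegOne_mul_diagOneNegOne, one_mul, mul_assoc,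
    diagOneNegOne_mul_diagOneNegOne, mul_one] at hh'

def nonsplitCartanNormalizer (ε : K) : Subgroup (GL (Fin 2) K) :=
  (nonsplitCartan ε).adjoinInvolution diagOneNegOne_mul_diagOneNegOne
    (diagOneNegOne_mem_normalizer ε)

theorem conj_diagOneNegOne_notMem_nonsplitCartan (h2 : (2 : K) ≠ 0) {ε : K}
    (hε : ∀ t : K, t ^ 2 ≠ ε) (a : GL (Fin 2) K) :
    a * diagOneNegOne * a⁻¹ ∉ nonsplitCartan ε := by
  rintro ⟨x, y, hxy⟩
  have htr := congrArg trace hxy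
  have hdet := congrArg det hxy
  rw [Units.val_mul, Units.val_mul, trace_units_conj, trace_cartanMat] at htr
  rw [Units.val_mul, Units.val_mul, det_units_conj, det_cartanMat] at hdet
  simp only [diagOneNegOne, trace_fin_two_of, det_fin_two_of] at htr hdet
  have hx : x = 0 := (mul_eq_zero.mp (by linear_combination -htr)).resolve_left h2
  have hy : ε * y ^ 2 = 1 := by linear_combination hdet + x * hx
  have hy0 : y ≠ 0 := by rintro rfl; simp at hy
  exact hε y⁻¹ (by field_simp; linear_combination -hy)


variable [Finite K] {ε : K}

theorem card_nonsplitCartanNormalizer (h2 : (2 : K) ≠ 0) (hε : ∀ t : K, t ^ 2 ≠ ε) :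
    Nat.card (nonsplitCartanNormalizer ε) = 2 * (Nat.card K ^ 2 - 1) := by
  rw [nonsplitCartanNormalizer, Subgroup.card_adjoinInvolution, card_nonsplitCartan hε]
  simpa using conj_diagOneNegOne_notMem_nonsplitCartan h2 hε 1

open Subgroup in
theorem exists_le_nonsplitCartanNormalizer_card (h2 : (2 : K) ≠ 0) (hε : ∀ t : K, t ^ 2 ≠ ε)
    {m : ℕ} (hm : m ∣ Nat.card K ^ 2 - 1) :
    ∃ G ≤ nonsplitCartanNormalizer ε, diagOneNegOne ∈ G ∧ Nat.card G = 2 * m := by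
  obtain ⟨ζ, hζ⟩ := (nonsplitCartan ε).isCyclic_iff_exists_zpowers_eq_top.mp
    (isCyclic_nonsplitCartan hε)
  obtain ⟨k, hk⟩ := hm
  have hk0 : k ≠ 0 := by
    rintro rfl
    have : 1 < Nat.card K ^ 2 := Nat.one_lt_pow two_ne_zero Finite.one_lt_card
    omega
  have hord : orderOf ζ = m * k := by
    rw [← hk, ← Nat.card_zpowers, hζ, card_nonsplitCartan hε]
  have hPC : zpowers (ζ ^ k) ≤ nonsplitCartan ε :=
    hζ ▸ zpowers_le.mpr (pow_mem (mem_zpowers ζ) k)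
  have hwP : diagOneNegOne ∈ normalizer (zpowers (ζ ^ k) : Set (GL (Fin 2) K)) :=
    normalizer_zpowers_le_normalizer_zpowers_pow ζ k (hζ ▸ diagOneNegOne_mem_normalizer ε)
  have hwP' : diagOneNegOne ∉ zpowers (ζ ^ k) := fun h =>
    conj_diagOneNegOne_notMem_nonsplitCartan h2 hε 1 (by simpa using hPC h)
  refine ⟨(zpowers (ζ ^ k)).adjoinInvolution diagOneNegOne_mul_diagOneNegOne hwP,
    adjoinInvolution_mono hPC, mem_adjoinInvolution_self, ?_⟩
  rw [card_adjoinInvolution hwP', Nat.card_zpowers,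
    orderOf_pow_of_dvd hk0 (hord ▸ dvd_mul_left k m), hord,
    Nat.mul_div_cancel _ (Nat.pos_of_ne_zero hk0)]

end NonsplitCartanNormalizer

section GL2

variable {ℓ : ℕ} [Fact ℓ.Prime]

theorem card_GL2 : Nat.card (GL2 ℓ) = 2 * (ℓ ^ 2 - 1) * (ℓ * (ℓ - 1) / 2) := by
  rw [card_GL_field, Fin.prod_univ_two, ZMod.card]
  simp only [Fin.val_zero, Fin.val_one, pow_zero, pow_one]
  rw [mul_comm 2, mul_assoc, Nat.two_mul_div_two_of_even (Nat.even_mul_pred_self ℓ), sq,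
    Nat.mul_sub_one]

variable {ε : ZMod ℓ}

theorem index_nonsplitCartanNormalizer (h2 : (2 : ZMod ℓ) ≠ 0) (hε : ∀ t : ZMod ℓ, t ^ 2 ≠ ε) :
    (nonsplitCartanNormalizer ε).index = ℓ * (ℓ - 1) / 2 := by
  have h := (nonsplitCartanNormalizer ε).card_mul_index
  rw [card_nonsplitCartanNormalizer h2 hε, card_GL2, Nat.card_zmod] at h
  have := Nat.one_lt_pow two_ne_zero (Fact.out : ℓ.Prime).one_lt
  exact Nat.eq_of_mul_eq_mul_left (by omega) h

theorem coe_nonsplitCartanNormalizer :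
    (nonsplitCartanNormalizer ε : Set (GL2 ℓ)) = Paper.NnsSet ℓ ε := by
  ext g
  exact or_congr Iff.rfl diagOneNegOne_mul_mem_nonsplitCartan_iff

theorem Paper.BelongsNns.exists_map_conj {G : Subgroup (GL2 ℓ)} (hG : Paper.BelongsNns ε G) :
    ∃ a : GL2 ℓ, G.map (MulAut.conj a).toMonoidHom ≤ nonsplitCartanNormalizer ε ∧
      ¬G.map (MulAut.conj a).toMonoidHom ≤ nonsplitCartan ε := by
  obtain ⟨⟨a, ha⟩, hnot⟩ := hG
  refine ⟨a, ?_, fun hle => hnot ⟨a, fun g hg => hle ⟨g, hg, rfl⟩⟩⟩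
  rintro _ ⟨g, hg, rfl⟩
  rw [← SetLike.mem_coe, coe_nonsplitCartanNormalizer]
  exact ha g hg

theorem Paper.BelongsNns.index_dvd_index {G : Subgroup (GL2 ℓ)} (hG : Paper.BelongsNns ε G) :
    (nonsplitCartanNormalizer ε).index ∣ G.index := by
  obtain ⟨a, hle, -⟩ := hG.exists_map_conj
  exact Subgroup.index_map_equiv G (MulAut.conj a) ▸ Subgroup.index_dvd_of_le hle

theorem Paper.BelongsNns.index_dvd_mul {G : Subgroup (GL2 ℓ)} (hG : Paper.BelongsNns ε G) :
    G.index ∣ ℓ * (ℓ - 1) / 2 * (ℓ ^ 2 - 1) := by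
  obtain ⟨a, hle, hnot⟩ := hG.exists_map_conj
  obtain ⟨c, hc⟩ := Subgroup.card_map_of_injective (f := (MulAut.conj a).toMonoidHom)
    (MulAut.conj a).injective ▸ Subgroup.two_dvd_card_of_le_adjoinInvolution hle hnot
  have h := G.card_mul_index
  rw [hc, card_GL2] at h
  exact ⟨c, by nlinarith⟩

theorem exists_belongsNns_index (h2 : (2 : ZMod ℓ) ≠ 0) (hε : ∀ t : ZMod ℓ, t ^ 2 ≠ ε) {k : ℕ}
    (hk : k ∣ ℓ ^ 2 - 1) :
    ∃ G : Subgroup (GL2 ℓ), Paper.BelongsNns ε G ∧ G.index = ℓ * (ℓ - 1) / 2 * k := by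
  obtain ⟨m, hm⟩ := hk
  obtain ⟨G, hGN, hwG, hcard⟩ := exists_le_nonsplitCartanNormalizer_card (m := m) h2 hε
    (by rw [Nat.card_zmod, hm]; exact dvd_mul_left m k)
  refine ⟨G, ⟨⟨1, fun g hg => ?_⟩, fun ⟨a, ha⟩ =>
    conj_diagOneNegOne_notMem_nonsplitCartan h2 hε a (ha _ hwG)⟩, ?_⟩
  · rw [← coe_nonsplitCartanNormalizer]
    simpa using hGN hg
  · have hm0 : 0 < m := Nat.pos_of_ne_zero fun h0 => by
      have := Nat.one_lt_pow two_ne_zero (Fact.out : ℓ.Prime).one_lt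
      simp only [h0, mul_zero] at hm
      omega
    have h := G.card_mul_index
    rw [hcard, card_GL2, hm] at h
    exact Nat.eq_of_mul_eq_mul_left (by positivity : 0 < 2 * m) (by rw [h]; ring)

end GL2

theorem statement_8 (ℓ : ℕ) (hℓ : Nat.Prime ℓ) (hodd : Odd ℓ) (ε : ZMod ℓ)
    (hε : ∀ t : ZMod ℓ, t ^ 2 ≠ ε) :
    { n : ℕ | ∃ G : Subgroup (GL2 ℓ), Paper.BelongsNns ε G ∧ G.index = n } =
      { n : ℕ | 0 < n ∧ ℓ * (ℓ - 1) / 2 ∣ n ∧ n ∣ ℓ * (ℓ + 1) * (ℓ - 1) ^ 2 / 2 } := by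
  have := Fact.mk hℓ
  have h2 : (2 : ZMod ℓ) ≠ 0 := Ring.two_ne_zero <| by
    rw [ZMod.ringChar_zmod_n]; rintro rfl; exact Nat.not_even_iff_odd.mpr hodd even_two
  have hℓ1 : 1 ≤ ℓ := hℓ.one_lt.le
  have hT : 0 < ℓ * (ℓ - 1) / 2 := by
    have := hℓ.two_le
    exact Nat.div_pos (by nlinarith [Nat.sub_add_cancel hℓ1]) two_pos
  have hhalf : ℓ * (ℓ + 1) * (ℓ - 1) ^ 2 / 2 = ℓ * (ℓ - 1) / 2 * (ℓ ^ 2 - 1) := by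
    rw [Nat.div_mul_right_comm (Nat.even_mul_pred_self ℓ).two_dvd]
    congr 1
    zify [hℓ1, Nat.one_le_pow 2 ℓ hℓ1]
    ring
  rw [hhalf]
  ext n
  constructor
  · rintro ⟨G, hG, rfl⟩
    exact ⟨Nat.pos_of_ne_zero G.index_ne_zero_of_finite,
      index_nonsplitCartanNormalizer h2 hε ▸ hG.index_dvd_index, hG.index_dvd_mul⟩
  · rintro ⟨-, ⟨k, rfl⟩, hk⟩
    exact exists_belongsNns_index h2 hε ((Nat.mul_dvd_mul_iff_left hT).mp hk)
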